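/- arXiv:2202.12297 — 3 statements merged into one kernel-verified Lean document; each statement's English description precedes it below -/
import Mathlib

section
/- Let N be a positive integer, α ≠ β be two model indices, and suppose for each model γ ∈ {α, β} and each input x the output is f_γ(x) = N^{-1/2} Σ_{i=1}^N c_i u_{γ i} φ(v_{γ i} h_{γ i}(x)), where (c_i), (v_{γ i}), and the random variables (h_{γ i}(x)) (the outputs of all preceding network layers) have an arbitrary joint distribution, φ: ℝ → ℝ is measurable, and the two families (u_{α i})_{i=1}^N and (u_{β i})_{i=1}^N consist of integrable random variables that are centered (E[u_{γ i}] = 0), mutually independent, and independent of all the other random variables (c, v, h and each other). Assume all appearing products are integrable. Then for all inputs x, x': E[f_α(x) · f_β(x')] = 0. -/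
/-!
Expand `f_α(x) f_β(x')` bilinearly into the terms `c_i u_{αi} φ(⋯) c_{i'} u_{βi'} φ(⋯) / N`.
In each term, `u_{αi}` is measurable for the block of the `u_α`, while the cofactor is measurable
for the join of the two other blocks; by the block independence these σ-algebras are independent,
so the expectation of the term factors and vanishes because `E[u_{αi}] = 0`.
-/

open MeasureTheory ProbabilityTheory

namespace ProbabilityTheory

variable {Ω : Type*} {mΩ : MeasurableSpace Ω} {μ : Measure Ω}

theorem iIndep.indep_sup_of_three {m₀ m₁ m₂ : MeasurableSpace Ω}
    (h₀ : m₀ ≤ mΩ) (h₁ : m₁ ≤ mΩ) (h₂ : m₂ ≤ mΩ) (h : iIndep ![m₀, m₁, m₂] μ) :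
    Indep m₀ (m₁ ⊔ m₂) μ := by
  have h_le : ∀ j, ![m₀, m₁, m₂] j ≤ mΩ := by
    intro j
    fin_cases j <;> assumption
  have hST : Disjoint ({0} : Set (Fin 3)) {1, 2} := by simp
  simpa [iSup_insert] using indep_iSup_of_disjoint h_le h hST

theorem Indep.integral_mul_eq_mul_integral {m₁ m₂ : MeasurableSpace Ω} {X Y : Ω → ℝ}
    (h : Indep m₁ m₂ μ) (h₁ : m₁ ≤ mΩ) (h₂ : m₂ ≤ mΩ)
    (hX : Measurable[m₁] X) (hY : Measurable[m₂] Y) :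
    ∫ ω, X ω * Y ω ∂μ = (∫ ω, X ω ∂μ) * ∫ ω, Y ω ∂μ := by
  have hXY : IndepFun X Y μ :=
    indep_of_indep_of_le_right (indep_of_indep_of_le_left h hX.comap_le) hY.comap_le
  exact hXY.integral_fun_mul_eq_mul_integral (hX.mono h₁ le_rfl).aestronglyMeasurable
    (hY.mono h₂ le_rfl).aestronglyMeasurable

end ProbabilityTheory

namespace MeasureTheory

variable {Ω ι κ : Type*} {mΩ : MeasurableSpace Ω} {μ : Measure Ω}

theorem integral_sum_mul_sum {s : Finset ι} {t : Finset κ} {f : ι → Ω → ℝ} {g : κ → Ω → ℝ}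
    (hfg : ∀ i ∈ s, ∀ j ∈ t, Integrable (fun ω => f i ω * g j ω) μ) :
    ∫ ω, (∑ i ∈ s, f i ω) * (∑ j ∈ t, g j ω) ∂μ = ∑ i ∈ s, ∑ j ∈ t, ∫ ω, f i ω * g j ω ∂μ := by
  simp_rw [Finset.sum_mul_sum]
  rw [integral_finsetSum _ fun i hi => integrable_finsetSum _ (hfg i hi)]
  exact Finset.sum_congr rfl fun i hi => integral_finsetSum _ (hfg i hi)

end MeasureTheory

section ComapSupremum

variable {Ω ι κ β : Type*} [mβ : MeasurableSpace β]

theorem measurable_iSup_comap (f : ι → Ω → β) (i : ι) :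
    Measurable[⨆ j, MeasurableSpace.comap (f j) mβ] (f i) :=
  measurable_iff_comap_le.2 (le_iSup (fun j => MeasurableSpace.comap (f j) mβ) i)

theorem measurable_iSup₂_comap (f : ι → κ → Ω → β) (i : ι) (k : κ) :
    Measurable[⨆ j, ⨆ l, MeasurableSpace.comap (f j l) mβ] (f i k) :=
  measurable_iff_comap_le.2 (le_iSup₂ (f := fun j l => MeasurableSpace.comap (f j l) mβ) i k)

theorem iSup_comap_le [mΩ : MeasurableSpace Ω] {f : ι → Ω → β} (hf : ∀ i, Measurable (f i)) :
    ⨆ i, MeasurableSpace.comap (f i) mβ ≤ mΩ :=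
  iSup_le fun i => (hf i).comap_le

theorem iSup₂_comap_le [mΩ : MeasurableSpace Ω] {f : ι → κ → Ω → β}
    (hf : ∀ i k, Measurable (f i k)) :
    ⨆ i, ⨆ k, MeasurableSpace.comap (f i k) mβ ≤ mΩ :=
  iSup_le fun i => iSup_comap_le (hf i)

end ComapSupremum

theorem centered_last_layer_modulations_decorrelate_models_general
    {Ω : Type*} [MeasurableSpace Ω] (P : Measure Ω) [IsProbabilityMeasure P]
    {X : Type*}  -- the space of inputs
    (N : ℕ)
    (c : Fin N → Ω → ℝ)                 -- last-layer shared weights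
    (uα uβ : Fin N → Ω → ℝ)             -- post-activation modulations of the two models
    (vα vβ : Fin N → Ω → ℝ)             -- pre-activation modulations of the two models
    (hα hβ : Fin N → X → Ω → ℝ)         -- outputs of all preceding network layers
    (φ : ℝ → ℝ) (hφ : Measurable φ)
    (hcm : ∀ i, Measurable (c i))
    (huαm : ∀ i, Measurable (uα i)) (huβm : ∀ i, Measurable (uβ i))
    (hvαm : ∀ i, Measurable (vα i)) (hvβm : ∀ i, Measurable (vβ i))
    (hhαm : ∀ i x, Measurable (hα i x)) (hhβm : ∀ i x, Measurable (hβ i x))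
    -- the `u_{α i}` and `u_{β i}` are integrable and centered
    (huα0 : ∀ i, ∫ ω, uα i ω ∂P = 0)
    -- the family `(u_{α i})`, the family `(u_{β i})` and all the other random variables
    -- (`c`, `v`, `h`) form three mutually independent blocks
    (hindep : iIndep
      ![⨆ i, MeasurableSpace.comap (uα i) inferInstance,
        ⨆ i, MeasurableSpace.comap (uβ i) inferInstance,
        (⨆ i, MeasurableSpace.comap (c i) inferInstance) ⊔
        (⨆ i, MeasurableSpace.comap (vα i) inferInstance) ⊔
        (⨆ i, MeasurableSpace.comap (vβ i) inferInstance) ⊔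
        (⨆ i, ⨆ x, MeasurableSpace.comap (hα i x) inferInstance) ⊔
        (⨆ i, ⨆ x, MeasurableSpace.comap (hβ i x) inferInstance)] P)
    -- all appearing products are integrable
    (hint : ∀ (x x' : X) (i i' : Fin N),
      Integrable (fun ω =>
        c i ω * uα i ω * φ (vα i ω * hα i x ω)
          * (c i' ω * uβ i' ω * φ (vβ i' ω * hβ i' x' ω))) P)
    -- the model outputs
    (fα fβ : X → Ω → ℝ)
    (hfα : ∀ x ω, fα x ω = (1 / Real.sqrt N) * ∑ i, c i ω * uα i ω * φ (vα i ω * hα i x ω))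
    (hfβ : ∀ x ω, fβ x ω = (1 / Real.sqrt N) * ∑ i, c i ω * uβ i ω * φ (vβ i ω * hβ i x ω)) :
    ∀ x x' : X, ∫ ω, fα x ω * fβ x' ω ∂P = 0 := by
  intro x x'
  have hrest_le := sup_le (sup_le (sup_le (sup_le (iSup_comap_le hcm) (iSup_comap_le hvαm))
    (iSup_comap_le hvβm)) (iSup₂_comap_le hhαm)) (iSup₂_comap_le hhβm)
  have hblocks := hindep.indep_sup_of_three (iSup_comap_le huαm) (iSup_comap_le huβm) hrest_le
  have hterm (i i' : Fin N) : ∫ ω, c i ω * uα i ω * φ (vα i ω * hα i x ω)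
      * (c i' ω * uβ i' ω * φ (vβ i' ω * hβ i' x' ω)) ∂P = 0 := by
    calc _ = ∫ ω, uα i ω * (c i ω * φ (vα i ω * hα i x ω)
          * (c i' ω * uβ i' ω * φ (vβ i' ω * hβ i' x' ω))) ∂P := by
          congr 1 with ω
          ring
      _ = (∫ ω, uα i ω ∂P) * ∫ ω, c i ω * φ (vα i ω * hα i x ω)
          * (c i' ω * uβ i' ω * φ (vβ i' ω * hβ i' x' ω)) ∂P := by
          refine hblocks.integral_mul_eq_mul_integral (iSup_comap_le huαm)
            (sup_le (iSup_comap_le huβm) hrest_le) (measurable_iSup_comap uα i) ?_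
          refine .mul (.mul ?_ (hφ.comp (.mul ?_ ?_))) (.mul (.mul ?_ ?_) (hφ.comp (.mul ?_ ?_)))
          all_goals first
            | refine (measurable_iSup_comap _ _).mono ?_ le_rfl; order
            | refine (measurable_iSup₂_comap _ _ _).mono ?_ le_rfl; order
      _ = 0 := by rw [huα0, zero_mul]
  simp_rw [hfα, hfβ, mul_mul_mul_comm, integral_const_mul]
  rw [integral_sum_mul_sum fun i _ i' _ => hint x x' i i']
  simp [hterm]

/-- **Finite-width independence of model outputs (Statement 4, Theorem 1 part 2).**
Two models `α ≠ β` have outputs `f_γ(x) = N^{-1/2} ∑ᵢ c_i u_{γ i} φ(v_{γ i} h_{γ i}(x))`,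
where `(c_i)`, `(v_{γ i})` and the previous-layer outputs `(h_{γ i}(x))` have an arbitrary
joint distribution, and the last-layer post-activation modulation families `(u_{α i})` and
`(u_{β i})` are integrable, centered, mutually independent, and independent of everything
else. Then `E[f_α(x) f_β(x')] = 0` for all inputs `x, x'`. -/
theorem centered_last_layer_modulations_decorrelate_models
    {Ω : Type*} [MeasurableSpace Ω] (P : Measure Ω) [IsProbabilityMeasure P]
    {X : Type*}  -- the space of inputs
    (N : ℕ) (hN : 0 < N)
    (c : Fin N → Ω → ℝ)                 -- last-layer shared weights
    (uα uβ : Fin N → Ω → ℝ)             -- post-activation modulations of the two models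
    (vα vβ : Fin N → Ω → ℝ)             -- pre-activation modulations of the two models
    (hα hβ : Fin N → X → Ω → ℝ)         -- outputs of all preceding network layers
    (φ : ℝ → ℝ) (hφ : Measurable φ)
    (hcm : ∀ i, Measurable (c i))
    (huαm : ∀ i, Measurable (uα i)) (huβm : ∀ i, Measurable (uβ i))
    (hvαm : ∀ i, Measurable (vα i)) (hvβm : ∀ i, Measurable (vβ i))
    (hhαm : ∀ i x, Measurable (hα i x)) (hhβm : ∀ i x, Measurable (hβ i x))
    -- the `u_{α i}` and `u_{β i}` are integrable and centered
    (huαint : ∀ i, Integrable (uα i) P) (huβint : ∀ i, Integrable (uβ i) P)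
    (huα0 : ∀ i, ∫ ω, uα i ω ∂P = 0) (huβ0 : ∀ i, ∫ ω, uβ i ω ∂P = 0)
    -- the family `(u_{α i})`, the family `(u_{β i})` and all the other random variables
    -- (`c`, `v`, `h`) form three mutually independent blocks
    (hindep : iIndep
      ![⨆ i, MeasurableSpace.comap (uα i) inferInstance,
        ⨆ i, MeasurableSpace.comap (uβ i) inferInstance,
        (⨆ i, MeasurableSpace.comap (c i) inferInstance) ⊔
        (⨆ i, MeasurableSpace.comap (vα i) inferInstance) ⊔
        (⨆ i, MeasurableSpace.comap (vβ i) inferInstance) ⊔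
        (⨆ i, ⨆ x, MeasurableSpace.comap (hα i x) inferInstance) ⊔
        (⨆ i, ⨆ x, MeasurableSpace.comap (hβ i x) inferInstance)] P)
    -- all appearing products are integrable
    (hint : ∀ (x x' : X) (i i' : Fin N),
      Integrable (fun ω =>
        c i ω * uα i ω * φ (vα i ω * hα i x ω)
          * (c i' ω * uβ i' ω * φ (vβ i' ω * hβ i' x' ω))) P)
    -- the model outputs
    (fα fβ : X → Ω → ℝ)
    (hfα : ∀ x ω, fα x ω = (1 / Real.sqrt N) * ∑ i, c i ω * uα i ω * φ (vα i ω * hα i x ω))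
    (hfβ : ∀ x ω, fβ x ω = (1 / Real.sqrt N) * ∑ i, c i ω * uβ i ω * φ (vβ i ω * hβ i x ω)) :
    ∀ x x' : X, ∫ ω, fα x ω * fβ x' ω ∂P = 0 :=
  centered_last_layer_modulations_decorrelate_models_general P N c uα uβ vα vβ hα hβ φ hφ hcm huαm
    huβm hvαm hvβm hhαm hhβm huα0 hindep hint fα fβ hfα hfβ
end

section
/- Let f: ℝ^P × ℝ^Q × ℝ^d → ℝ, (w, u, x) ↦ f(w, u, x), be continuously differentiable in (w, u); fix M ≥ 1, a training set (x_b, y_b)_{b=1}^B, L: ℝ × ℝ → ℝ continuously differentiable in its first argument, and a scaling constant γ > 0. Define 𝓛_β(w, u_β) = (1/B) Σ_b L(f(w, u_β, x_b), y_b). Suppose w: ℝ → ℝ^P and u_α: ℝ → ℝ^Q (α = 1,…,M) are differentiable and satisfy w'(t) = −(γ/M) Σ_{β=1}^M ∇_w 𝓛_β(w(t), u_β(t)) and u_α'(t) = −∇_{u_α} 𝓛_α(w(t), u_α(t)). Then for every x and every α, d/dt f(w(t), u_α(t), x) = −(1/B) Σ_{b=1}^B Σ_{β=1}^M Θ_{αβ}(x,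 x_b) · ∂L/∂ŷ (f(w(t), u_β(t), x_b), y_b), where Θ_{αβ}(x, x') = (γ/M) ∇_w f(w, u_α, x) · ∇_w f(w, u_β, x') + δ_{αβ} ∇_{u_α} f(w, u_α, x) · ∇_{u_α} f(w, u_α, x') evaluated at time t. -/
open Finset
open scoped RealInnerProductSpace

/-!
The output `f(w(t), u_α(t), x)` is the composite of the jointly differentiable map
`(w, u) ↦ f(w, u, x)` with the parameter trajectory, so its time derivative is
`⟪∇_w f, w'⟫ + ⟪∇_u f, u_α'⟫`. By the chain rule, `∇_w 𝓛_β` and `∇_u 𝓛_α` are the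
`∂L/∂ŷ`-weighted averages of the gradients of `f` at the training points; substituting them
into the gradient flow and expanding the inner products gives the kernel form, the common
parameters coupling all models and the individual ones only model `α` with itself.
-/

section Partial

variable {𝕜 E F G : Type*} [NontriviallyNormedField 𝕜] [NormedAddCommGroup E] [NormedSpace 𝕜 E]
  [NormedAddCommGroup F] [NormedSpace 𝕜 F] [NormedAddCommGroup G] [NormedSpace 𝕜 G]

theorem DifferentiableAt.uncurry_left {g : E → F → G} {a : E} {b : F}
    (hg : DifferentiableAt 𝕜 (Function.uncurry g) (a, b)) :
    DifferentiableAt 𝕜 (fun v => g v b) a :=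
  hg.comp (f := fun v => (v, b)) a (differentiableAt_id.prodMk (differentiableAt_const b))

theorem DifferentiableAt.uncurry_right {g : E → F → G} {a : E} {b : F}
    (hg : DifferentiableAt 𝕜 (Function.uncurry g) (a, b)) :
    DifferentiableAt 𝕜 (fun z => g a z) b :=
  hg.comp (f := fun z => (a, z)) b ((differentiableAt_const a).prodMk differentiableAt_id)

end Partial

section Calculus

variable {E F : Type*} [NormedAddCommGroup E] [InnerProductSpace ℝ E] [CompleteSpace E]
  [NormedAddCommGroup F] [InnerProductSpace ℝ F] [CompleteSpace F]

theorem fderiv_uncurry_apply_eq_inner_gradient {g : E → F → ℝ} {a : E} {b : F}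
    (hg : DifferentiableAt ℝ (Function.uncurry g) (a, b)) (v : E) (z : F) :
    fderiv ℝ (Function.uncurry g) (a, b) (v, z)
      = ⟪gradient (fun v => g v b) a, v⟫ + ⟪gradient (fun z => g a z) b, z⟫ := by
  have hleft : HasFDerivAt (fun v => g v b)
      ((fderiv ℝ (Function.uncurry g) (a, b)).comp (.inl ℝ E F)) a :=
    hg.hasFDerivAt.comp (f := fun v => (v, b)) a (hasFDerivAt_prodMk_left a b)
  have hright : HasFDerivAt (fun z => g a z)
      ((fderiv ℝ (Function.uncurry g) (a, b)).comp (.inr ℝ E F)) b :=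
    hg.hasFDerivAt.comp (f := fun z => (a, z)) b (hasFDerivAt_prodMk_right a b)
  rw [inner_gradient_left, inner_gradient_left, hleft.fderiv, hright.fderiv]
  exact ((fderiv ℝ (Function.uncurry g) (a, b)).comp_inl_add_comp_inr (v, z)).symm

theorem HasDerivAt.uncurry_comp {g : E → F → ℝ} {w : ℝ → E} {u : ℝ → F} {w' : E} {u' : F}
    {t : ℝ} (hg : DifferentiableAt ℝ (Function.uncurry g) (w t, u t))
    (hw : HasDerivAt w w' t) (hu : HasDerivAt u u' t) :
    HasDerivAt (fun s => g (w s) (u s))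
      (⟪gradient (fun v => g v (u t)) (w t), w'⟫
        + ⟪gradient (fun z => g (w t) z) (u t), u'⟫) t := by
  rw [← fderiv_uncurry_apply_eq_inner_gradient hg]
  exact hg.hasFDerivAt.comp_hasDerivAt t (hw.prodMk hu)

theorem hasGradientAt_empiricalRisk {ι : Type*} [Fintype ι] (L : ℝ → ℝ → ℝ) (y : ι → ℝ)
    {h : ι → E → ℝ} {a : E} (c : ℝ) (hh : ∀ i, DifferentiableAt ℝ (h i) a)
    (hL : ∀ i, DifferentiableAt ℝ (fun ŷ => L ŷ (y i)) (h i a)) :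
    HasGradientAt (fun v => c * ∑ i, L (h i v) (y i))
      (c • ∑ i, deriv (fun ŷ => L ŷ (y i)) (h i a) • gradient (h i) a) a := by
  rw [hasGradientAt_iff_hasFDerivAt, map_smul, map_sum]
  simp only [map_smul, toDual_gradient]
  exact .const_mul
    (.fun_sum fun i _ => (hL i).hasDerivAt.comp_hasFDerivAt a (hh i).hasFDerivAt) c

end Calculus

theorem neg_mul_sum_kernel_mul_eq_inner {E F κ ι D : Type*} [NormedAddCommGroup E]
    [InnerProductSpace ℝ E] [NormedAddCommGroup F] [InnerProductSpace ℝ F]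
    [Fintype κ] [Fintype ι] [DecidableEq κ] (a s : ℝ) (g : κ → D → E) (h : κ → D → F)
    (c : κ → ι → ℝ) (X : ι → D) (x : D) (α : κ) :
    -s * ∑ i, ∑ β, (a * ⟪g α x, g β (X i)⟫
        + (if α = β then 1 else 0) * ⟪h α x, h α (X i)⟫) * c β i
      = ⟪g α x, -(a • ∑ β, s • ∑ i, c β i • g β (X i))⟫
        + ⟪h α x, -(s • ∑ i, c α i • h α (X i))⟫ := by
  simp only [inner_neg_right, real_inner_smul_right, inner_sum, add_mul, sum_add_distrib,
    ite_mul, one_mul, zero_mul, sum_ite_eq, mem_univ, if_true, mul_add, mul_sum]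
  rw [sum_comm]
  simp only [← sum_neg_distrib]
  congr 1 <;> refine sum_congr rfl fun _ _ => ?_
  · refine sum_congr rfl fun _ _ => ?_
    ring
  · ring

theorem embedded_ensemble_output_dynamics_general
    (Pdim Q d B M : ℕ) (γ : ℝ)
    (f : EuclideanSpace ℝ (Fin Pdim) → EuclideanSpace ℝ (Fin Q) →
      EuclideanSpace ℝ (Fin d) → ℝ)
    -- `f` is continuously differentiable in `(w, u)` jointly
    (hf : ∀ x, ContDiff ℝ 1
      (fun p : EuclideanSpace ℝ (Fin Pdim) × EuclideanSpace ℝ (Fin Q) => f p.1 p.2 x))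
    (X : Fin B → EuclideanSpace ℝ (Fin d)) (Y : Fin B → ℝ)
    (L : ℝ → ℝ → ℝ) (hL : ∀ y, ContDiff ℝ 1 (fun yhat => L yhat y))
    (𝓛 : EuclideanSpace ℝ (Fin Pdim) → EuclideanSpace ℝ (Fin Q) → ℝ)
    (h𝓛 : ∀ w u, 𝓛 w u = (1 / (B : ℝ)) * ∑ b, L (f w u (X b)) (Y b))
    -- trajectories of the common and individual parameters
    (w : ℝ → EuclideanSpace ℝ (Fin Pdim))
    (uu : Fin M → ℝ → EuclideanSpace ℝ (Fin Q))
    (hw : ∀ t, HasDerivAt w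
      (-((γ / (M : ℝ)) • ∑ β, gradient (fun v => 𝓛 v (uu β t)) (w t))) t)
    (hu : ∀ (α : Fin M) (t : ℝ), HasDerivAt (uu α)
      (-gradient (fun v => 𝓛 (w t) v) (uu α t)) t)
    -- the ensemble Neural Tangent Kernel at time `t`
    (Θ : Fin M → Fin M → EuclideanSpace ℝ (Fin d) → EuclideanSpace ℝ (Fin d) → ℝ → ℝ)
    (hΘ : ∀ α β x x' t, Θ α β x x' t
      = (γ / (M : ℝ))
          * ⟪gradient (fun v => f v (uu α t) x) (w t),
             gradient (fun v => f v (uu β t) x') (w t)⟫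
        + (if α = β then (1 : ℝ) else 0)
          * ⟪gradient (fun v => f (w t) v x) (uu α t),
             gradient (fun v => f (w t) v x') (uu α t)⟫) :
    ∀ (x : EuclideanSpace ℝ (Fin d)) (α : Fin M) (t : ℝ),
      HasDerivAt (fun s => f (w s) (uu α s) x)
        (-(1 / (B : ℝ)) * ∑ b, ∑ β, Θ α β x (X b) t
            * deriv (fun yhat => L yhat (Y b)) (f (w t) (uu β t) (X b))) t := by
  intro x α t
  have hf_diff : ∀ x' u, DifferentiableAt ℝ (Function.uncurry fun v u => f v u x') (w t, u) :=
    fun x' u => (hf x').differentiable one_ne_zero _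
  have hL_diff : ∀ b z, DifferentiableAt ℝ (fun yhat => L yhat (Y b)) z :=
    fun b => (hL (Y b)).differentiable one_ne_zero
  have hgrad_w : ∀ u, gradient (fun v => 𝓛 v u) (w t) = (1 / (B : ℝ)) • ∑ b,
      deriv (fun yhat => L yhat (Y b)) (f (w t) u (X b))
        • gradient (fun v => f v u (X b)) (w t) := by
    intro u
    simp only [h𝓛]
    exact (hasGradientAt_empiricalRisk L Y (h := fun b v => f v u (X b)) _
      (fun b => (hf_diff (X b) u).uncurry_left) (fun b => hL_diff b _)).gradient
  have hgrad_u : gradient (fun v => 𝓛 (w t) v) (uu α t) = (1 / (B : ℝ)) • ∑ b,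
      deriv (fun yhat => L yhat (Y b)) (f (w t) (uu α t) (X b))
        • gradient (fun v => f (w t) v (X b)) (uu α t) := by
    simp only [h𝓛]
    exact (hasGradientAt_empiricalRisk L Y (h := fun b v => f (w t) v (X b)) _
      (fun b => (hf_diff (X b) (uu α t)).uncurry_right) (fun b => hL_diff b _)).gradient
  convert (hw t).uncurry_comp (hf_diff x (uu α t)) (hu α t) using 1
  simp only [hΘ, hgrad_w, hgrad_u]
  exact neg_mul_sum_kernel_mul_eq_inner (γ / M) (1 / B)
    (fun β x' => gradient (fun v => f v (uu β t) x') (w t))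
    (fun β x' => gradient (fun v => f (w t) v x') (uu β t))
    (fun β b => deriv (fun yhat => L yhat (Y b)) (f (w t) (uu β t) (X b))) X x α

/-- **Embedded-ensemble output dynamics (Statement 7, equations (9)–(10) of the paper).**
Models `f(w, u_α, x)` share parameters `w` and have individual parameters `u_α`. Under the
gradient flow `w' = −(γ/M) ∑_β ∇_w 𝓛_β(w, u_β)`, `u_α' = −∇_{u_α} 𝓛_α(w, u_α)` with
`𝓛_β(w, u) = (1/B) ∑_b L(f(w, u, x_b), y_b)`, each model output satisfies
`d/dt f(w(t), u_α(t), x) = −(1/B) ∑_b ∑_β Θ_{αβ}(x, x_b) ∂L/∂yhat(f(w, u_β, x_b), y_b)`,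
where `Θ_{αβ}(x,x') = (γ/M) ⟪∇_w f(w,u_α,x), ∇_w f(w,u_β,x')⟫
+ δ_{αβ} ⟪∇_u f(w,u_α,x), ∇_u f(w,u_α,x')⟫`. -/
theorem embedded_ensemble_output_dynamics
    (Pdim Q d B M : ℕ) (hM : 1 ≤ M) (γ : ℝ) (hγ : 0 < γ)
    (f : EuclideanSpace ℝ (Fin Pdim) → EuclideanSpace ℝ (Fin Q) →
      EuclideanSpace ℝ (Fin d) → ℝ)
    -- `f` is continuously differentiable in `(w, u)` jointly
    (hf : ∀ x, ContDiff ℝ 1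
      (fun p : EuclideanSpace ℝ (Fin Pdim) × EuclideanSpace ℝ (Fin Q) => f p.1 p.2 x))
    (X : Fin B → EuclideanSpace ℝ (Fin d)) (Y : Fin B → ℝ)
    (L : ℝ → ℝ → ℝ) (hL : ∀ y, ContDiff ℝ 1 (fun yhat => L yhat y))
    (𝓛 : EuclideanSpace ℝ (Fin Pdim) → EuclideanSpace ℝ (Fin Q) → ℝ)
    (h𝓛 : ∀ w u, 𝓛 w u = (1 / (B : ℝ)) * ∑ b, L (f w u (X b)) (Y b))
    -- trajectories of the common and individual parameters
    (w : ℝ → EuclideanSpace ℝ (Fin Pdim))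
    (uu : Fin M → ℝ → EuclideanSpace ℝ (Fin Q))
    (hw : ∀ t, HasDerivAt w
      (-((γ / (M : ℝ)) • ∑ β, gradient (fun v => 𝓛 v (uu β t)) (w t))) t)
    (hu : ∀ (α : Fin M) (t : ℝ), HasDerivAt (uu α)
      (-gradient (fun v => 𝓛 (w t) v) (uu α t)) t)
    -- the ensemble Neural Tangent Kernel at time `t`
    (Θ : Fin M → Fin M → EuclideanSpace ℝ (Fin d) → EuclideanSpace ℝ (Fin d) → ℝ → ℝ)
    (hΘ : ∀ α β x x' t, Θ α β x x' t
      = (γ / (M : ℝ))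
          * ⟪gradient (fun v => f v (uu α t) x) (w t),
             gradient (fun v => f v (uu β t) x') (w t)⟫
        + (if α = β then (1 : ℝ) else 0)
          * ⟪gradient (fun v => f (w t) v x) (uu α t),
             gradient (fun v => f (w t) v x') (uu α t)⟫) :
    ∀ (x : EuclideanSpace ℝ (Fin d)) (α : Fin M) (t : ℝ),
      HasDerivAt (fun s => f (w s) (uu α s) x)
        (-(1 / (B : ℝ)) * ∑ b, ∑ β, Θ α β x (X b) t
            * deriv (fun yhat => L yhat (Y b)) (f (w t) (uu β t) (X b))) t :=
  embedded_ensemble_output_dynamics_general Pdim Q d B M γ f hf X Y L hL 𝓛 h𝓛 w uu hw hu Θ hΘ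
end

section
/- Let φ: ℝ → ℝ be measurable, nonnegative, nondecreasing, and not identically zero. Let g₁, g₂ be independent standard Gaussian random variables and y₁ = a₁ g₁ + a₂ g₂, y₂ = b₁ g₁ + b₂ g₂ for real coefficients a₁, a₂, b₁, b₂. If E[φ(y₁) φ(y₂)] = 0, then at least one of the following holds: (i) y₁ = 0 almost surely; (ii) y₂ = 0 almost surely; (iii) there exists c < 0 such that y₂ = c · y₁ almost surely (i.e., (y₁, y₂) is degenerate with negatively correlated, linearly dependent components). -/
open MeasureTheory ProbabilityTheory

/-- **Degeneracy dichotomy (Statement 13, proof of Theorem 1 part 3).**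
If `φ` is measurable, nonnegative, nondecreasing and not identically zero, `g₁, g₂` are
independent standard Gaussians, `y₁ = a₁ g₁ + a₂ g₂`, `y₂ = b₁ g₁ + b₂ g₂`, and
`E[φ(y₁) φ(y₂)] = 0`, then either `y₁ = 0` a.s., or `y₂ = 0` a.s., or there exists `c < 0`
with `y₂ = c y₁` a.s. -/
theorem activation_covariance_zero_dichotomy
    {Ω : Type*} [MeasurableSpace Ω] (P : Measure Ω) [IsProbabilityMeasure P]
    (φ : ℝ → ℝ) (hφm : Measurable φ) (hφ0 : ∀ s, 0 ≤ φ s) (hφmono : Monotone φ)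
    (hφne : ∃ s, φ s ≠ 0)
    (g₁ g₂ : Ω → ℝ) (hg₁m : Measurable g₁) (hg₂m : Measurable g₂)
    (hindep : IndepFun g₁ g₂ P)
    (hg₁ : Measure.map g₁ P = gaussianReal 0 1)
    (hg₂ : Measure.map g₂ P = gaussianReal 0 1)
    (a₁ a₂ b₁ b₂ : ℝ)
    (y₁ y₂ : Ω → ℝ)
    (hy₁ : ∀ ω, y₁ ω = a₁ * g₁ ω + a₂ * g₂ ω)
    (hy₂ : ∀ ω, y₂ ω = b₁ * g₁ ω + b₂ * g₂ ω)
    (hzero : ∫⁻ ω, ENNReal.ofReal (φ (y₁ ω) * φ (y₂ ω)) ∂P = 0) :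
    (∀ᵐ ω ∂P, y₁ ω = 0) ∨ (∀ᵐ ω ∂P, y₂ ω = 0) ∨
      (∃ c : ℝ, c < 0 ∧ ∀ᵐ ω ∂P, y₂ ω = c * y₁ ω) := by
  obtain ⟨s₀, hs₀⟩ := hφne
  have hφs₀ : 0 < φ s₀ := (hφ0 s₀).lt_of_ne (Ne.symm hs₀)
  by_cases ha : a₁ = 0 ∧ a₂ = 0
  · left
    filter_upwards with ω
    simp [hy₁ ω, ha.1, ha.2]
  by_cases hb : b₁ = 0 ∧ b₂ = 0
  · right; left
    filter_upwards with ω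
    simp [hy₂ ω, hb.1, hb.2]
  by_cases hc : ∃ c : ℝ, c < 0 ∧ b₁ = c * a₁ ∧ b₂ = c * a₂
  · obtain ⟨c, hc0, h1, h2⟩ := hc
    right; right
    refine ⟨c, hc0, Filter.Eventually.of_forall fun ω => ?_⟩
    rw [hy₁ ω, hy₂ ω, h1, h2]; ring
  exfalso
  -- There is a point where both linear forms exceed s₀.
  have hp : ∃ p : ℝ × ℝ, s₀ < a₁ * p.1 + a₂ * p.2 ∧ s₀ < b₁ * p.1 + b₂ * p.2 := by
    by_cases hdet : a₁ * b₂ - a₂ * b₁ = 0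
    · -- b is a positive multiple of a
      obtain ⟨c, hcb1, hcb2⟩ : ∃ c : ℝ, b₁ = c * a₁ ∧ b₂ = c * a₂ := by
        rcases (not_and_or.mp ha) with h | h
        · exact ⟨b₁ / a₁, by field_simp, by field_simp; nlinarith [hdet]⟩
        · exact ⟨b₂ / a₂, by field_simp; nlinarith [hdet], by field_simp⟩
      have hcne : c ≠ 0 := by
        rintro rfl
        exact hb ⟨by simpa using hcb1, by simpa using hcb2⟩
      have hcpos : 0 < c := by
        rcases lt_or_gt_of_ne hcne with h | h
        · exact absurd ⟨c, h, hcb1, hcb2⟩ hc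
        · exact h
      have hr : 0 < a₁ ^ 2 + a₂ ^ 2 := by
        rcases (not_and_or.mp ha) with h | h <;> positivity
      set r := a₁ ^ 2 + a₂ ^ 2 with hrdef
      refine ⟨((|s₀| + 1) * (1 + 1 / c) / r * a₁, (|s₀| + 1) * (1 + 1 / c) / r * a₂), ?_, ?_⟩
      · have : a₁ * ((|s₀| + 1) * (1 + 1 / c) / r * a₁) + a₂ * ((|s₀| + 1) * (1 + 1 / c) / r * a₂)
            = (|s₀| + 1) * (1 + 1 / c) := by field_simp; ring
        rw [this]
        have h1 : (1 : ℝ) < 1 + 1 / c := by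
          have : 0 < 1 / c := by positivity
          linarith
        nlinarith [abs_nonneg s₀, le_abs_self s₀]
      · have : b₁ * ((|s₀| + 1) * (1 + 1 / c) / r * a₁) + b₂ * ((|s₀| + 1) * (1 + 1 / c) / r * a₂)
            = (|s₀| + 1) * (c + 1) := by rw [hcb1, hcb2]; field_simp; ring
        rw [this]
        nlinarith [abs_nonneg s₀, le_abs_self s₀]
    · -- linearly independent: solve for both equal to s₀ + 1
      set d := a₁ * b₂ - a₂ * b₁ with hd
      refine ⟨(((s₀ + 1) * b₂ - (s₀ + 1) * a₂) / d, ((s₀ + 1) * a₁ - (s₀ + 1) * b₁) / d), ?_, ?_⟩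
      · have : a₁ * (((s₀ + 1) * b₂ - (s₀ + 1) * a₂) / d)
            + a₂ * (((s₀ + 1) * a₁ - (s₀ + 1) * b₁) / d) = s₀ + 1 := by
          field_simp; ring
        rw [this]; linarith
      · have : b₁ * (((s₀ + 1) * b₂ - (s₀ + 1) * a₂) / d)
            + b₂ * (((s₀ + 1) * a₁ - (s₀ + 1) * b₁) / d) = s₀ + 1 := by
          field_simp; ring
        rw [this]; linarith
  obtain ⟨p, hp1, hp2⟩ := hp
  set U : Set (ℝ × ℝ) := {x | s₀ < a₁ * x.1 + a₂ * x.2 ∧ s₀ < b₁ * x.1 + b₂ * x.2} with hU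
  have hUopen : IsOpen U := by
    apply IsOpen.inter
    · exact isOpen_lt continuous_const
        ((continuous_const.mul continuous_fst).add (continuous_const.mul continuous_snd))
    · exact isOpen_lt continuous_const
        ((continuous_const.mul continuous_fst).add (continuous_const.mul continuous_snd))
  have hUne : U.Nonempty := ⟨p, hp1, hp2⟩
  -- the product Gaussian gives U positive mass
  have hvol : (volume : Measure (ℝ × ℝ)) U ≠ 0 := hUopen.measure_ne_zero volume hUne
  have hac : (volume : Measure (ℝ × ℝ)) ≪ (gaussianReal 0 1).prod (gaussianReal 0 1) := by
    rw [Measure.volume_eq_prod]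
    exact Measure.AbsolutelyContinuous.prod
      (gaussianReal_absolutelyContinuous' 0 one_ne_zero)
      (gaussianReal_absolutelyContinuous' 0 one_ne_zero)
  have hμ2U : ((gaussianReal 0 1).prod (gaussianReal 0 1)) U ≠ 0 := fun h => hvol (hac h)
  -- map (g₁, g₂) pushes P to the product Gaussian
  have hmap : Measure.map (fun ω => (g₁ ω, g₂ ω)) P
      = (gaussianReal 0 1).prod (gaussianReal 0 1) := by
    rw [(indepFun_iff_map_prod_eq_prod_map_map hg₁m.aemeasurable hg₂m.aemeasurable).mp hindep,
      hg₁, hg₂]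
  have hpairm : Measurable (fun ω => (g₁ ω, g₂ ω)) := hg₁m.prodMk hg₂m
  have hPE : P ((fun ω => (g₁ ω, g₂ ω)) ⁻¹' U) ≠ 0 := by
    rw [← Measure.map_apply hpairm hUopen.measurableSet, hmap]
    exact hμ2U
  -- but on this event, the integrand in hzero is positive, while it vanishes a.e.
  have hy₁m : Measurable y₁ := by
    have : y₁ = fun ω => a₁ * g₁ ω + a₂ * g₂ ω := funext hy₁
    rw [this]; fun_prop
  have hy₂m : Measurable y₂ := by
    have : y₂ = fun ω => b₁ * g₁ ω + b₂ * g₂ ω := funext hy₂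
    rw [this]; fun_prop
  have hmeas : Measurable fun ω => ENNReal.ofReal (φ (y₁ ω) * φ (y₂ ω)) :=
    ((hφm.comp hy₁m).mul (hφm.comp hy₂m)).ennreal_ofReal
  have hae : ∀ᵐ ω ∂P, ENNReal.ofReal (φ (y₁ ω) * φ (y₂ ω)) = 0 :=
    (lintegral_eq_zero_iff hmeas).mp hzero
  apply hPE
  refine measure_mono_null (fun ω hω => ?_) (ae_iff.mp hae)
  simp only [Set.mem_preimage, hU, Set.mem_setOf_eq] at hω
  simp only [Set.mem_setOf_eq]
  have h1 : 0 < φ (y₁ ω) := lt_of_lt_of_le hφs₀ (hφmono (by rw [hy₁ ω]; exact hω.1.le))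
  have h2 : 0 < φ (y₂ ω) := lt_of_lt_of_le hφs₀ (hφmono (by rw [hy₂ ω]; exact hω.2.le))
  simp [ENNReal.ofReal_eq_zero, not_le, mul_pos h1 h2]
end
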